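/- arXiv:1708.03611 — 2 statements merged into one kernel-verified Lean document; each statement's English description precedes it below -/
import Mathlib

section
/- Let γ ∈ Γ_s and δ ∈ Γ_{s'} be combinatorial galleries, p a monotone embedding, and w ∈ W. Suppose β_{p(k)}(δ) = ε_k · w·β_k(γ) for all k = 1,…,|s|, where each ε_k = ±1. Then for any indices i, k one has β_{p(k)}(f_{p(i)} δ) = ε_k · w·β_k(f_i γ). In particular, if (γ, δ) is a (p,w)-pair, then (f_i γ, f_{p(i)} δ) is also a (p,w)-pair. -/
section GallerySetup

variable {W : Type} [Group W] {E : Type} [AddCommGroup E] [DistribMulAction W E]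

/-- The Weyl-group element contributed by position `i` of a combinatorial gallery:
`s_{α_i}` if the gallery crosses the wall there (`γ i = true`), and `e` otherwise. -/
def galElt (s : E → W) {r : ℕ} (α : Fin r → E) (γ : Fin r → Bool) (i : Fin r) : W :=
  if γ i then s (α i) else 1

/-- `γ^k = γ₁ ⋯ γ_k`, the product of the first `k` entries of the gallery. -/
def gpref (s : E → W) {r : ℕ} (α : Fin r → E) (γ : Fin r → Bool) (k : ℕ) : W :=
  (((List.finRange r).take k).map (galElt s α γ)).prod

/-- `β_i(γ) = γ^i (-α_i)` (here `i : Fin r` is the 0-based index of the paper's `i+1`). -/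
def gbeta (s : E → W) {r : ℕ} (α : Fin r → E) (γ : Fin r → Bool) (i : Fin r) : E :=
  gpref s α γ (i.val + 1) • (-(α i))

/-- The folding operator at position `i`: it replaces `γ_i` by `γ_i s_i`. -/
def gfold {r : ℕ} (γ : Fin r → Bool) (i : Fin r) : Fin r → Bool :=
  Function.update γ i (!(γ i))

end GallerySetup


section GalleryHelpers

set_option linter.unusedSectionVars false

variable {W : Type} [Group W] {E : Type} [AddCommGroup E] [DistribMulAction W E]

lemma gpref_succ (s : E → W) {r : ℕ} (α : Fin r → E) (γ : Fin r → Bool) (k : ℕ)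
    (hk : k < r) : gpref s α γ (k+1) = gpref s α γ k * galElt s α γ ⟨k, hk⟩ := by
  unfold gpref
  rw [List.take_succ]
  simp [List.getElem?_eq_getElem, hk]

lemma gpref_stab (s : E → W) {r : ℕ} (α : Fin r → E) (γ : Fin r → Bool) (k : ℕ)
    (hk : r ≤ k) : gpref s α γ (k+1) = gpref s α γ k := by
  unfold gpref
  rw [List.take_of_length_le (by simpa using hk.trans (Nat.le_succ k)),
    List.take_of_length_le (by simpa using hk)]

lemma gpref_gfold (s : E → W) {r : ℕ} (α : Fin r → E) (γ : Fin r → Bool) (i : Fin r)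
    (hconj : ∀ (u : W) (a : E), s (u • a) = u * s a * u⁻¹)
    (hneg : ∀ a : E, s (-a) = s a)
    (hsq : ∀ a : E, s a * s a = 1) (k : ℕ) :
    gpref s α (gfold γ i) k =
      (if i.val < k then s (gbeta s α γ i) else 1) * gpref s α γ k := by
  have hinv : ∀ a : E, (s a)⁻¹ = s a := fun a =>
    inv_eq_of_mul_eq_one_right (hsq a)
  induction k with
  | zero => simp [gpref]
  | succ k ih =>
    by_cases hk : k < r
    · rw [gpref_succ s α (gfold γ i) k hk, gpref_succ s α γ k hk, ih]
      rcases lt_trichotomy k i.val with h | h | h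
      · have h1 : ¬ i.val < k := by omega
        have h2 : ¬ i.val < k + 1 := by omega
        have hne : (⟨k, hk⟩ : Fin r) ≠ i := by
          intro he; exact absurd (congrArg Fin.val he) (by simpa using h.ne)
        simp [h1, h2, galElt, gfold, Function.update_of_ne hne]
      · have hi : i = ⟨k, hk⟩ := by
          apply Fin.ext; simp [h]
        subst hi
        have h1 : ¬ (k : ℕ) < k := lt_irrefl k
        simp only [h1, if_false, one_mul]
        unfold gbeta
        rw [hconj, hneg, gpref_succ s α γ k hk]
        set A := gpref s α γ k with hA
        unfold galElt gfold
        simp only [Function.update_self]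
        cases hgi : γ (⟨k, hk⟩ : Fin r) with
        | true => simp [hgi, mul_assoc, hsq, hinv]
        | false => simp [hgi, mul_assoc, hinv]
      · have h1 : i.val < k := h
        have h2 : i.val < k + 1 := by omega
        have hne : (⟨k, hk⟩ : Fin r) ≠ i := by
          intro he; exact absurd (congrArg Fin.val he) (by simpa using h.ne')
        simp [h1, h2, galElt, gfold, Function.update_of_ne hne, mul_assoc]
    · have hk' : r ≤ k := le_of_not_gt hk
      rw [gpref_stab s α (gfold γ i) k hk', gpref_stab s α γ k hk', ih]
      have : i.val < k := lt_of_lt_of_le i.isLt hk'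
      simp [this, Nat.lt_succ_iff, this.le]

lemma gbeta_gfold (s : E → W) {r : ℕ} (α : Fin r → E) (γ : Fin r → Bool) (i k : Fin r)
    (hconj : ∀ (u : W) (a : E), s (u • a) = u * s a * u⁻¹)
    (hneg : ∀ a : E, s (-a) = s a)
    (hsq : ∀ a : E, s a * s a = 1) :
    gbeta s α (gfold γ i) k =
      (if i ≤ k then s (gbeta s α γ i) else 1) • gbeta s α γ k := by
  unfold gbeta
  rw [gpref_gfold s α γ i hconj hneg hsq]
  by_cases h : i ≤ k
  · have h' : i.val < k.val + 1 := Nat.lt_succ_of_le h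
    simp [gbeta, h, h', mul_smul]
  · have h' : ¬ i.val < k.val + 1 := fun hh => h (Fin.le_def.mpr (Nat.lt_succ_iff.mp hh))
    simp [gbeta, h, h', mul_smul]

end GalleryHelpers

/-- Lemma on `(p,w)`-pairs: if `β_{p(k)}(δ) = ε_k · w β_k(γ)` for all `k` (with signs
`ε_k = ±1`), then `β_{p(k)}(f_{p(i)} δ) = ε_k · w β_k(f_i γ)` for all `i, k`.  In
particular, if `(γ, δ)` is a `(p,w)`-pair then so is `(f_i γ, f_{p(i)} δ)`. -/
theorem stmt4 {W : Type} [Group W] {E : Type} [AddCommGroup E] [DistribMulAction W E]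
    (s : E → W) {r r' : ℕ} (α : Fin r → E) (α' : Fin r' → E)
    (p : Fin r → Fin r') (hp : StrictMono p) (w : W)
    (γ : Fin r → Bool) (δ : Fin r' → Bool) (ε : Fin r → ℤˣ)
    (hconj : ∀ (u : W) (a : E), s (u • a) = u * s a * u⁻¹)
    (hneg : ∀ a : E, s (-a) = s a)
    (hsq : ∀ a : E, s a * s a = 1)
    (hsa : ∀ j : Fin r, s (α j) • α j = -(α j))
    (hsa' : ∀ j : Fin r', s (α' j) • α' j = -(α' j))
    (hpair : ∀ k : Fin r, gbeta s α' δ (p k) = ((ε k : ℤ) • (w • gbeta s α γ k))) :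
    ∀ i k : Fin r,
      gbeta s α' (gfold δ (p i)) (p k) =
        ((ε k : ℤ) • (w • gbeta s α (gfold γ i) k)) := by
  intro i k
  rw [gbeta_gfold s α' δ (p i) (p k) hconj hneg hsq,
    gbeta_gfold s α γ i k hconj hneg hsq, hpair k]
  have hβ : s (gbeta s α' δ (p i)) = w * s (gbeta s α γ i) * w⁻¹ := by
    rw [hpair i]
    rcases Int.units_eq_one_or (ε i) with h | h <;> simp [h, hconj, hneg]
  by_cases h : i ≤ k
  · rw [if_pos (hp.le_iff_le.mpr h), if_pos h, hβ]
    rcases Int.units_eq_one_or (ε k) with hk | hk <;>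
      simp [hk, mul_smul, smul_neg, inv_smul_smul]
  · rw [if_neg (fun hh => h (hp.le_iff_le.mp hh)), if_neg h, one_smul, one_smul]
end

section
/- Let (p, w, φ) : s → s' be a morphism of the folding category (so φ : Γ_s → Γ_{s'} intertwines foldings via p and (μ, φ(μ)) is always a (p,w)-pair). Then φ is injective. Moreover, for any γ ∈ Γ_s, a gallery δ ∈ Γ_{s'} lies in the image of φ if and only if δ_j = φ(γ)_j for all j ∈ [1,|s'|] not in the image of p. -/
section Aux
variable {r r' : ℕ}

/-- Multi-fold: toggle the gallery at every position of `S`. -/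
def mfold (γ : Fin r → Bool) (S : Finset (Fin r)) : Fin r → Bool :=
  fun j => xor (γ j) (decide (j ∈ S))

lemma mfold_empty (γ : Fin r → Bool) : mfold γ ∅ = γ := by
  funext j; simp [mfold]

lemma mfold_insert (γ : Fin r → Bool) {i : Fin r} {S : Finset (Fin r)} (h : i ∉ S) :
    mfold γ (insert i S) = gfold (mfold γ S) i := by
  funext j
  by_cases hj : j = i
  · subst hj; simp [mfold, gfold, h]
  · simp [mfold, gfold, Function.update, hj]

lemma phi_mfold (p : Fin r → Fin r') (hpinj : Function.Injective p)
    (φ : (Fin r → Bool) → (Fin r' → Bool))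
    (hmor2 : ∀ (μ : Fin r → Bool) (i : Fin r), φ (gfold μ i) = gfold (φ μ) (p i))
    (μ : Fin r → Bool) (S : Finset (Fin r)) :
    φ (mfold μ S) = mfold (φ μ) (S.map ⟨p, hpinj⟩) := by
  classical
  induction S using Finset.induction_on with
  | empty => simp [mfold_empty]
  | @insert i S hi ih =>
      have hpi : p i ∉ S.map ⟨p, hpinj⟩ := by
        simp only [Finset.mem_map, Function.Embedding.coeFn_mk]
        rintro ⟨x, hx, hxe⟩
        exact hi (hpinj hxe ▸ hx)
      rw [mfold_insert _ hi, hmor2, ih, Finset.map_insert]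
      exact (mfold_insert _ hpi).symm

lemma mfold_diff (μ ν : Fin r → Bool) :
    mfold μ (Finset.univ.filter fun i => μ i ≠ ν i) = ν := by
  classical
  funext j
  simp only [mfold, Finset.mem_filter, Finset.mem_univ, true_and]
  cases hu : μ j <;> cases hv : ν j <;> simp [hu, hv]

end Aux

/-- For a morphism `(p,w,φ)` of the folding category, the map `φ` on galleries is
injective; moreover, for any gallery `γ`, a gallery `δ` of type `s'` lies in the image of
`φ` if and only if `δ_j = φ(γ)_j` for every position `j` not in the image of `p`. -/
theorem stmt6 {W : Type} [Group W] {E : Type} [AddCommGroup E] [DistribMulAction W E]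
    (s : E → W) {r r' : ℕ} (α : Fin r → E) (α' : Fin r' → E)
    (p : Fin r → Fin r') (hp : StrictMono p) (w : W)
    (φ : (Fin r → Bool) → (Fin r' → Bool))
    (hmor1 : ∀ (μ : Fin r → Bool) (k : Fin r), ∃ η : ℤˣ,
      gbeta s α' (φ μ) (p k) = ((η : ℤ) • (w • gbeta s α μ k)))
    (hmor2 : ∀ (μ : Fin r → Bool) (i : Fin r), φ (gfold μ i) = gfold (φ μ) (p i)) :
    Function.Injective φ ∧
    ∀ (γ : Fin r → Bool) (δ : Fin r' → Bool),
      δ ∈ Set.range φ ↔ ∀ j : Fin r', (∀ i : Fin r, p i ≠ j) → δ j = φ γ j := by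
  classical
  have hpinj := hp.injective
  constructor
  · intro μ ν h
    have h1 : φ ν =
        mfold (φ μ) ((Finset.univ.filter fun i => μ i ≠ ν i).map ⟨p, hpinj⟩) := by
      conv_lhs => rw [← mfold_diff μ ν]
      rw [phi_mfold p hpinj φ hmor2]
    by_contra hne
    have hne' : (Finset.univ.filter fun i => μ i ≠ ν i).Nonempty := by
      rw [Finset.filter_nonempty_iff]
      by_contra hc
      push_neg at hc
      exact hne (funext fun i => hc i (Finset.mem_univ i))
    obtain ⟨i, hi⟩ := hne'
    have h2 : φ ν (p i) = xor (φ μ (p i)) true := by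
      rw [h1]
      simp only [mfold]
      congr 1
      simp only [decide_eq_true_eq, Finset.mem_map, Function.Embedding.coeFn_mk]
      exact ⟨i, hi, rfl⟩
    rw [← h] at h2
    cases hb : φ μ (p i) <;> simp [hb] at h2
  · intro γ δ
    constructor
    · rintro ⟨μ, rfl⟩ j hj
      have h1 : φ μ =
          mfold (φ γ) ((Finset.univ.filter fun i => γ i ≠ μ i).map ⟨p, hpinj⟩) := by
        conv_lhs => rw [← mfold_diff γ μ]
        rw [phi_mfold p hpinj φ hmor2]
      rw [h1]
      simp only [mfold]
      have hmem : decide (j ∈ (Finset.univ.filter fun i => γ i ≠ μ i).map ⟨p, hpinj⟩)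
          = false := by
        simp only [decide_eq_false_iff_not, Finset.mem_map, Function.Embedding.coeFn_mk]
        rintro ⟨x, _, hxe⟩
        exact hj x hxe
      rw [hmem, Bool.xor_false]
    · intro h
      refine ⟨mfold γ (Finset.univ.filter fun i => δ (p i) ≠ φ γ (p i)), ?_⟩
      rw [phi_mfold p hpinj φ hmor2]
      funext j
      by_cases hj : ∃ i, p i = j
      · obtain ⟨i, rfl⟩ := hj
        have hmem : ((p i ∈ (Finset.univ.filter fun i => δ (p i) ≠ φ γ (p i)).map
            ⟨p, hpinj⟩)) ↔ δ (p i) ≠ φ γ (p i) := by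
          simp only [Finset.mem_map, Finset.mem_filter, Finset.mem_univ, true_and,
            Function.Embedding.coeFn_mk]
          exact ⟨fun ⟨x, hx, hxe⟩ => hpinj hxe ▸ hx, fun hd => ⟨i, hd, rfl⟩⟩
        simp only [mfold, hmem]
        cases hd : δ (p i) <;> cases hg : φ γ (p i) <;> simp [hd, hg]
      · push_neg at hj
        have hmem : decide (j ∈ (Finset.univ.filter fun i => δ (p i) ≠ φ γ (p i)).map
            ⟨p, hpinj⟩) = false := by
          simp only [decide_eq_false_iff_not, Finset.mem_map, Function.Embedding.coeFn_mk]
          rintro ⟨x, _, hxe⟩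
          exact hj x hxe
        simp only [mfold, hmem, Bool.xor_false]
        exact (h j hj).symm
end
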